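/- arXiv:1605.05599 — 11 statements merged into one kernel-verified Lean document; each statement's English description precedes it below -/
import Mathlib

section
/- Let G1 and G2 be simple graphs on the same finite vertex set, let ℓ ≥ 1, and let u_0, …, u_{ℓ−1} be distinct vertices. Suppose that for every k, k' ∈ {0, …, ℓ−1}: there is no red–blue-link from u_k to u_{(k+1 mod ℓ)}, and if u_k u_{k'} ∈ E(G2) then u_{(k+1 mod ℓ)} u_{(k'+1 mod ℓ)} ∉ E(G1). Let τ be the permutation of the vertex set that maps u_k to u_{(k+1 mod ℓ)} for each k and fixes all other vertices, and let G2' be the image of G2 under τ (i.e., x'y' ∈ E(G2') iff τ⁻¹(x')τ⁻¹(y') ∈ E(G2)). Then no edge belonging to both G1 and G2' is incident to any of u_0, …, u_{ℓ−1}. -/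
theorem stmt_5_general {V : Type*}
    (G1 G2 : SimpleGraph V)
    (ℓ : ℕ) [NeZero ℓ] (u : Fin ℓ → V)
    (hnolink : ∀ k : Fin ℓ, ¬ ∃ i' : V, G2.Adj (u k) i' ∧ G1.Adj i' (u (k + 1)))
    (hswap : ∀ k k' : Fin ℓ, G2.Adj (u k) (u k') → ¬ G1.Adj (u (k + 1)) (u (k' + 1)))
    (τ : Equiv.Perm V)
    (hτ : ∀ k : Fin ℓ, τ (u k) = u (k + 1))
    (hτfix : ∀ x : V, (∀ k : Fin ℓ, x ≠ u k) → τ x = x)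
    (G2' : SimpleGraph V)
    (hG2' : ∀ x y : V, G2'.Adj x y ↔ G2.Adj (τ.symm x) (τ.symm y)) :
    ∀ (k : Fin ℓ) (x : V), ¬ (G1.Adj (u k) x ∧ G2'.Adj (u k) x) := by
  have hτ_symm (k : Fin ℓ) : τ.symm (u (k + 1)) = u k := τ.symm_apply_eq.mpr (hτ k).symm
  rintro k x ⟨hblue, hred⟩
  obtain ⟨j, rfl⟩ := add_right_surjective 1 k
  rw [hG2', hτ_symm] at hred
  by_cases hx : ∃ k', x = u k'
  · obtain ⟨k', rfl⟩ := hx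
    obtain ⟨j', rfl⟩ := add_right_surjective 1 k'
    rw [hτ_symm] at hred
    exact hswap j j' hred hblue
  · push Not at hx
    rw [τ.symm_apply_eq.mpr (hτfix x hx).symm] at hred
    exact hnolink j ⟨x, hred, hblue.symm⟩

theorem stmt_5 {V : Type*} [Fintype V] [DecidableEq V]
    (G1 G2 : SimpleGraph V)
    (ℓ : ℕ) [NeZero ℓ] (u : Fin ℓ → V) (hu : Function.Injective u)
    (hnolink : ∀ k : Fin ℓ, ¬ ∃ i' : V, G2.Adj (u k) i' ∧ G1.Adj i' (u (k + 1)))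
    (hswap : ∀ k k' : Fin ℓ, G2.Adj (u k) (u k') → ¬ G1.Adj (u (k + 1)) (u (k' + 1)))
    (τ : Equiv.Perm V)
    (hτ : ∀ k : Fin ℓ, τ (u k) = u (k + 1))
    (hτfix : ∀ x : V, (∀ k : Fin ℓ, x ≠ u k) → τ x = x)
    (G2' : SimpleGraph V)
    (hG2' : ∀ x y : V, G2'.Adj x y ↔ G2.Adj (τ.symm x) (τ.symm y)) :
    ∀ (k : Fin ℓ) (x : V), ¬ (G1.Adj (u k) x ∧ G2'.Adj (u k) x) :=
  stmt_5_general G1 G2 ℓ u hnolink hswap τ hτ hτfix G2' hG2'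
end

section
/- (Corrádi's lemma) Let N ≥ 1, k ≥ 1 and t ≥ 1 be integers, let A_1, …, A_N be finite sets each of cardinality exactly k, and let X = A_1 ∪ ⋯ ∪ A_N. If |A_i ∩ A_j| ≤ t − 1 for all i ≠ j, then |X| ≥ k²·N / (k + (N−1)·(t−1)). -/
/-!
Count each point `x ∈ X` with its multiplicity `d x = #{i | x ∈ A i}`. Double counting gives
`∑ d x = N k` and `∑ (d x)² = ∑ i, ∑ j, |A i ∩ A j| ≤ N (k + (N - 1)(t - 1))`, and Cauchy–Schwarz
`(∑ d x)² ≤ |X| ∑ (d x)²` then bounds `|X|` from below.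
-/

open Finset

namespace Finset

variable {α ι : Type*} [DecidableEq α] [Fintype ι] {A : ι → Finset α} {X : Finset α}

theorem sum_card_filter_mem_eq_sum_card (hX : ∀ i, A i ⊆ X) :
    ∑ x ∈ X, #{i | x ∈ A i} = ∑ i, #(A i) := by
  refine (sum_card_bipartiteAbove_eq_sum_card_bipartiteBelow
    (s := X) (t := univ) (fun x i => x ∈ A i)).trans (sum_congr rfl fun i _ => ?_)
  rw [bipartiteBelow, filter_mem_eq_inter, inter_eq_right.mpr (hX i)]

theorem sum_card_filter_mem_sq_eq_sum_sum_card_inter (hX : ∀ i, A i ⊆ X) :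
    ∑ x ∈ X, #{i | x ∈ A i} ^ 2 = ∑ i, ∑ j, #(A i ∩ A j) := by
  have hsq : ∀ x, #{i | x ∈ A i} ^ 2 = #{p : ι × ι | x ∈ A p.1 ∩ A p.2} := fun x => by
    rw [sq, ← card_product, ← filter_product, univ_product_univ]
    simp only [mem_inter]
  simp_rw [hsq]
  refine (sum_card_bipartiteAbove_eq_sum_card_bipartiteBelow
    (s := X) (t := univ) (fun x (p : ι × ι) => x ∈ A p.1 ∩ A p.2)).trans ?_
  rw [← univ_product_univ, sum_product]
  refine sum_congr rfl fun i _ => sum_congr rfl fun j _ => ?_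
  rw [bipartiteBelow, filter_mem_eq_inter, inter_eq_right.mpr (inter_subset_left.trans (hX i))]

theorem sum_sum_card_inter_le [DecidableEq ι] {k s : ℕ} (hcard : ∀ i, #(A i) = k)
    (hinter : Pairwise fun i j => #(A i ∩ A j) ≤ s) :
    ∑ i, ∑ j, #(A i ∩ A j) ≤ Fintype.card ι * (k + (Fintype.card ι - 1) * s) := by
  rw [← smul_eq_mul, ← card_univ, ← sum_const]
  refine sum_le_sum fun i _ => ?_
  rw [← add_sum_erase _ _ (mem_univ i), inter_self, hcard, ← card_erase_of_mem (mem_univ i),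
    ← smul_eq_mul, ← sum_const]
  gcongr with j hj
  exact hinter (ne_of_mem_erase hj).symm

theorem card_mul_sq_le_card_mul_of_card_inter_le [DecidableEq ι] {k s : ℕ} (hX : ∀ i, A i ⊆ X)
    (hcard : ∀ i, #(A i) = k) (hinter : Pairwise fun i j => #(A i ∩ A j) ≤ s) :
    Fintype.card ι * k ^ 2 ≤ #X * (k + (Fintype.card ι - 1) * s) := by
  obtain hι | hι := (Fintype.card ι).eq_zero_or_pos
  · simp [hι]
  refine Nat.le_of_mul_le_mul_left ?_ hι
  calc Fintype.card ι * (Fintype.card ι * k ^ 2)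
      = (∑ x ∈ X, #{i | x ∈ A i}) ^ 2 := by
        rw [sum_card_filter_mem_eq_sum_card hX, sum_congr rfl fun i _ => hcard i, sum_const,
          card_univ, smul_eq_mul]
        ring
    _ ≤ #X * ∑ x ∈ X, #{i | x ∈ A i} ^ 2 := sq_sum_le_card_mul_sum_sq
    _ ≤ #X * (Fintype.card ι * (k + (Fintype.card ι - 1) * s)) := by
        rw [sum_card_filter_mem_sq_eq_sum_sum_card_inter hX]
        gcongr
        exact sum_sum_card_inter_le hcard hinter
    _ = Fintype.card ι * (#X * (k + (Fintype.card ι - 1) * s)) := by ring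

end Finset

theorem stmt_6_general {α : Type*} [DecidableEq α] (N k t : ℕ)
    (ht : 1 ≤ t)
    (A : Fin N → Finset α) (hcard : ∀ i, (A i).card = k)
    (X : Finset α) (hX : X = Finset.univ.biUnion A)
    (hinter : ∀ i j : Fin N, i ≠ j → (A i ∩ A j).card ≤ t - 1) :
    (X.card : ℝ) ≥ (k : ℝ) ^ 2 * (N : ℝ) / ((k : ℝ) + ((N : ℝ) - 1) * ((t : ℝ) - 1)) := by
  obtain rfl | hN := N.eq_zero_or_pos
  · simp
  have hsub : ∀ i, A i ⊆ X := hX ▸ fun i => subset_biUnion_of_mem A (mem_univ i)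
  have key := card_mul_sq_le_card_mul_of_card_inter_le hsub hcard fun i j => hinter i j
  rw [Fintype.card_fin] at key
  have hcast : ((k + (N - 1) * (t - 1) : ℕ) : ℝ) = (k : ℝ) + ((N : ℝ) - 1) * ((t : ℝ) - 1) := by
    push_cast [Nat.cast_sub hN, Nat.cast_sub ht]
    ring
  rw [ge_iff_le, ← hcast]
  refine div_le_of_le_mul₀ (Nat.cast_nonneg _) (Nat.cast_nonneg _) ?_
  rw [mul_comm]
  exact_mod_cast key

theorem stmt_6 {α : Type*} [DecidableEq α] (N k t : ℕ)
    (hN : 1 ≤ N) (hk : 1 ≤ k) (ht : 1 ≤ t)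
    (A : Fin N → Finset α) (hcard : ∀ i, (A i).card = k)
    (X : Finset α) (hX : X = Finset.univ.biUnion A)
    (hinter : ∀ i j : Fin N, i ≠ j → (A i ∩ A j).card ≤ t - 1) :
    (X.card : ℝ) ≥ (k : ℝ) ^ 2 * (N : ℝ) / ((k : ℝ) + ((N : ℝ) - 1) * ((t : ℝ) - 1)) :=
  stmt_6_general N k t ht A hcard X hX hinter
end

section
/- Let G1 and G2 be simple graphs on the same finite vertex set of size n that do not pack, and suppose that the edge {u,v} is the unique edge belonging to both G1 and G2 (i.e., E(G1) ∩ E(G2) = {{u,v}}). Then for every vertex w ≠ v, there is a red–blue-link or a blue–red-link from u to w. -/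
/-! If there is no link from `u` to `w`, transposing `u` and `w` creates no new red–blue
conflict: every edge of `G2` that lands on an edge of `G1` is purple and is either `uw` itself
or avoids both `u` and `w`. Since `uv` is the only purple edge and `w ≠ v`, no such edge exists,
so the transposition packs `G1` and `G2`. -/

open SimpleGraph Equiv

lemma mem_edgeSet_inter_of_adj_swap {V : Type*} [DecidableEq V] {G1 G2 : SimpleGraph V}
    {u w x y : V} (hrb : ¬ ∃ i, G2.Adj u i ∧ G1.Adj i w) (hbr : ¬ ∃ i, G1.Adj u i ∧ G2.Adj i w)
    (h2 : G2.Adj x y) (h1 : G1.Adj (swap u w x) (swap u w y)) :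
    s(x, y) ∈ G1.edgeSet ∩ G2.edgeSet ∧ (s(x, y) = s(u, w) ∨ (u ∉ s(x, y) ∧ w ∉ s(x, y))) := by
  simp only [swap_apply_def] at h1
  simp only [Set.mem_inter_iff, mem_edgeSet, Sym2.eq_iff, Sym2.mem_iff, not_exists,
    not_and] at *
  -- an edge with exactly one end in `{u, w}` would give a link from `u` to `w`
  split_ifs at h1 <;> subst_vars <;> grind [Adj.symm, Adj.ne]

theorem stmt_8_general {V : Type*} [DecidableEq V]
    (G1 G2 : SimpleGraph V)
    (hnopack : ¬ ∃ σ : Equiv.Perm V, ∀ x y : V, G2.Adj x y → ¬ G1.Adj (σ x) (σ y))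
    (u v : V) (huv : G1.edgeSet ∩ G2.edgeSet = {s(u, v)}) :
    ∀ w : V, w ≠ v →
      (∃ i' : V, G2.Adj u i' ∧ G1.Adj i' w) ∨ (∃ i' : V, G1.Adj u i' ∧ G2.Adj i' w) := by
  intro w hw
  by_contra hlink
  rw [not_or] at hlink
  refine hnopack ⟨swap u w, fun x y h2 h1 => ?_⟩
  obtain ⟨hpurple, hxy⟩ := mem_edgeSet_inter_of_adj_swap hlink.1 hlink.2 h2 h1
  rw [huv, Set.mem_singleton_iff] at hpurple
  rw [hpurple] at hxy
  rcases hxy with hvw | ⟨hu, -⟩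
  · exact hw (Sym2.congr_right.mp hvw).symm
  · exact hu (Sym2.mem_mk_left u v)

theorem stmt_8 {V : Type*} [Fintype V] [DecidableEq V]
    (G1 G2 : SimpleGraph V) (n : ℕ) (hn : Fintype.card V = n)
    (hnopack : ¬ ∃ σ : Equiv.Perm V, ∀ x y : V, G2.Adj x y → ¬ G1.Adj (σ x) (σ y))
    (u v : V) (huv : G1.edgeSet ∩ G2.edgeSet = {s(u, v)}) :
    ∀ w : V, w ≠ v →
      (∃ i' : V, G2.Adj u i' ∧ G1.Adj i' w) ∨ (∃ i' : V, G1.Adj u i' ∧ G2.Adj i' w) :=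
  stmt_8_general G1 G2 hnopack u v huv
end

section
/- Let G1 and G2 be simple graphs on the same finite vertex set of size n that do not pack, and suppose that the edge {u,v} is the unique edge belonging to both G1 and G2 (i.e., E(G1) ∩ E(G2) = {{u,v}}). Then for every a ∈ A*(u) and every b ∈ B(u), there is a red–blue-link from a to b. -/
/-!
If there were no red–blue link from `a` to `b`, the cyclic permutation `u ↦ a ↦ b ↦ u` would
pack the two graphs: a red edge at `u`, `a` or `b` is sent to a non-blue pair by the defining
non-adjacencies of `A*(u)` and `B(u)` together with the missing link, and every other red edge
is fixed and is not blue, because the only purple edge contains `u`.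
-/

open SimpleGraph Finset

theorem Equiv.Perm.exists_cycle_three {V : Type*} [DecidableEq V] {u a b : V}
    (hua : u ≠ a) (hab : a ≠ b) (hbu : b ≠ u) :
    ∃ σ : Equiv.Perm V, σ u = a ∧ σ a = b ∧ σ b = u ∧
      ∀ z, z ≠ u → z ≠ a → z ≠ b → σ z = z :=
  ⟨(Equiv.swap u a).trans (Equiv.swap u b),
    by simp [Equiv.swap_apply_of_ne_of_ne, hua.symm, hab],
    by simp,
    by simp [Equiv.swap_apply_of_ne_of_ne, hbu, hab.symm],
    fun z hzu hza hzb => by simp [Equiv.swap_apply_of_ne_of_ne, hzu, hza, hzb]⟩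

namespace SimpleGraph

variable {V : Type*} {G₁ G₂ : SimpleGraph V}

def IsPacking (G₁ G₂ : SimpleGraph V) (σ : V → V) : Prop :=
  ∀ x y, G₂.Adj x y → ¬ G₁.Adj (σ x) (σ y)

theorem eq_or_eq_of_edgeSet_inter_eq_singleton {u v x y : V}
    (h : G₁.edgeSet ∩ G₂.edgeSet = {s(u, v)}) (h₁ : G₁.Adj x y) (h₂ : G₂.Adj x y) :
    x = u ∨ y = u := by
  have hxy : s(x, y) ∈ ({s(u, v)} : Set (Sym2 V)) := h ▸ ⟨h₁, h₂⟩
  rcases Sym2.eq_iff.mp (Set.mem_singleton_iff.mp hxy) with ⟨hx, -⟩ | ⟨-, hy⟩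
  exacts [Or.inl hx, Or.inr hy]

theorem isPacking_of_cycle_three {u a b : V} {σ : V → V}
    (hσu : σ u = a) (hσa : σ a = b) (hσb : σ b = u)
    (hσ : ∀ z, z ≠ u → z ≠ a → z ≠ b → σ z = z)
    (hpurple : ∀ x y, G₁.Adj x y → G₂.Adj x y → x = u ∨ y = u)
    (hua : ¬ G₂.Adj u a) (hub₁ : ¬ G₁.Adj u b) (hub₂ : ¬ G₂.Adj u b)
    (ha : ∀ y, G₂.Adj u y → ¬ G₁.Adj y a) (hb : ∀ y, G₁.Adj u y → ¬ G₂.Adj y b)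
    (hlink : ∀ y, G₂.Adj a y → ¬ G₁.Adj y b) :
    IsPacking G₁ G₂ σ := by
  have from_u : ∀ y, G₂.Adj u y → ¬ G₁.Adj (σ u) (σ y) := by
    intro y hy
    rw [hσu, hσ y (G₂.ne_of_adj hy).symm (fun h => hua (h ▸ hy)) (fun h => hub₂ (h ▸ hy))]
    exact fun h => ha y hy h.symm
  have from_a : ∀ y, G₂.Adj a y → ¬ G₁.Adj (σ a) (σ y) := by
    intro y hy
    by_cases hyb : y = b
    · subst hyb
      rw [hσa, hσb]
      exact fun h => hub₁ h.symm
    rw [hσa, hσ y (fun h => hua (h ▸ hy.symm)) (G₂.ne_of_adj hy).symm hyb]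
    exact fun h => hlink y hy h.symm
  have from_b : ∀ y, G₂.Adj b y → ¬ G₁.Adj (σ b) (σ y) := by
    intro y hy
    by_cases hya : y = a
    · subst hya
      exact fun h => from_a b hy.symm h.symm
    rw [hσb, hσ y (fun h => hub₂ (h ▸ hy.symm)) hya (G₂.ne_of_adj hy).symm]
    exact fun h => hb y h hy.symm
  have from_cycle : ∀ x y, G₂.Adj x y → x = u ∨ x = a ∨ x = b → ¬ G₁.Adj (σ x) (σ y) := by
    rintro x y hxy (rfl | rfl | rfl)
    exacts [from_u y hxy, from_a y hxy, from_b y hxy]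
  intro x y hxy hσxy
  by_cases hx : x = u ∨ x = a ∨ x = b
  · exact from_cycle x y hxy hx hσxy
  by_cases hy : y = u ∨ y = a ∨ y = b
  · exact from_cycle y x hxy.symm hy hσxy.symm
  push Not at hx hy
  rw [hσ x hx.1 hx.2.1 hx.2.2, hσ y hy.1 hy.2.1 hy.2.2] at hσxy
  exact (hpurple x y hσxy hxy).elim hx.1 hy.1

end SimpleGraph

theorem stmt_9_general {V : Type*} [Fintype V] [DecidableEq V]
    (G1 G2 : SimpleGraph V) [DecidableRel G1.Adj] [DecidableRel G2.Adj]
    (hnopack : ¬ ∃ σ : Equiv.Perm V, ∀ x y : V, G2.Adj x y → ¬ G1.Adj (σ x) (σ y))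
    (u v : V) (huv : G1.edgeSet ∩ G2.edgeSet = {s(u, v)})
    (Astar B : Finset V)
    (hAstar : Astar = ((G1.neighborFinset u).biUnion fun x => G2.neighborFinset x)
        \ (G2.neighborFinset u ∪ ((G2.neighborFinset u).biUnion fun x => G1.neighborFinset x)))
    (hB : B = ((G2.neighborFinset u).biUnion fun x => G1.neighborFinset x)
        \ (G1.neighborFinset u ∪ G2.neighborFinset u
          ∪ ((G1.neighborFinset u).biUnion fun x => G2.neighborFinset x))) :
    ∀ a ∈ Astar, ∀ b ∈ B, ∃ i' : V, G2.Adj a i' ∧ G1.Adj i' b := by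
  intro a ha b hb
  by_contra hnolink
  push Not at hnolink
  subst hAstar hB
  simp only [mem_sdiff, mem_union, mem_biUnion, mem_neighborFinset, not_or, not_exists,
    not_and] at ha hb
  obtain ⟨⟨w, huw, hwa⟩, hua, ha_far⟩ := ha
  obtain ⟨⟨x, hux, hxb⟩, ⟨hub₁, hub₂⟩, hb_far⟩ := hb
  have hau : u ≠ a := by
    rintro rfl
    exact ha_far w hwa.symm huw.symm
  have hab : a ≠ b := by
    rintro rfl
    exact hb_far w huw hwa
  have hbu : b ≠ u := by
    rintro rfl
    exact hb_far x hxb.symm hux.symm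
  obtain ⟨σ, hσu, hσa, hσb, hσ⟩ := Equiv.Perm.exists_cycle_three hau hab hbu
  exact hnopack ⟨σ, isPacking_of_cycle_three hσu hσa hσb hσ
    (fun _ _ => eq_or_eq_of_edgeSet_inter_eq_singleton huv) hua hub₁ hub₂ ha_far hb_far hnolink⟩

theorem stmt_9 {V : Type*} [Fintype V] [DecidableEq V]
    (G1 G2 : SimpleGraph V) [DecidableRel G1.Adj] [DecidableRel G2.Adj]
    (n : ℕ) (hn : Fintype.card V = n)
    (hnopack : ¬ ∃ σ : Equiv.Perm V, ∀ x y : V, G2.Adj x y → ¬ G1.Adj (σ x) (σ y))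
    (u v : V) (huv : G1.edgeSet ∩ G2.edgeSet = {s(u, v)})
    (Astar B : Finset V)
    (hAstar : Astar = ((G1.neighborFinset u).biUnion fun x => G2.neighborFinset x)
        \ (G2.neighborFinset u ∪ ((G2.neighborFinset u).biUnion fun x => G1.neighborFinset x)))
    (hB : B = ((G2.neighborFinset u).biUnion fun x => G1.neighborFinset x)
        \ (G1.neighborFinset u ∪ G2.neighborFinset u
          ∪ ((G1.neighborFinset u).biUnion fun x => G2.neighborFinset x))) :
    ∀ a ∈ Astar, ∀ b ∈ B, ∃ i' : V, G2.Adj a i' ∧ G1.Adj i' b :=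
  stmt_9_general G1 G2 hnopack u v huv Astar B hAstar hB
end

section
/- Let G1 and G2 be simple graphs on the same finite vertex set of size n that do not pack, and suppose that the edge {u,v} is the unique edge belonging to both G1 and G2 (i.e., E(G1) ∩ E(G2) = {{u,v}}). Then n ≤ |N2(u)| + |A*(u)| + |N1(N2(u))|. -/
open SimpleGraph Finset

/- If `w` lies outside `N2(u) ∪ N1(N2(u)) ∪ N2(N1(u))`, the transposition of `u` and `w` sends
every red edge onto a non-blue pair, except the red edges that are already blue and avoid `u`.
Since the only common edge `uv` contains `u`, this transposition would be a packing; so every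
vertex lies in `N2(u) ∪ A*(u) ∪ N1(N2(u))`, and counting gives the bound. -/

namespace SimpleGraph

variable {V : Type*} [DecidableEq V] {G1 G2 : SimpleGraph V}

theorem adj_of_adj_swap {u w x y : V} (h2u : ¬ G2.Adj u w)
    (h21 : ∀ z, G2.Adj u z → ¬ G1.Adj z w) (h12 : ∀ z, G1.Adj u z → ¬ G2.Adj z w)
    (h2 : G2.Adj x y) (h1 : G1.Adj (Equiv.swap u w x) (Equiv.swap u w y)) :
    G1.Adj x y ∧ x ≠ u ∧ y ≠ u := by
  rw [Equiv.swap_apply_def, Equiv.swap_apply_def] at h1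
  split_ifs at h1 <;> grind [Adj.symm, Adj.ne]

end SimpleGraph

theorem stmt_10 {V : Type*} [Fintype V] [DecidableEq V]
    (G1 G2 : SimpleGraph V) [DecidableRel G1.Adj] [DecidableRel G2.Adj]
    (n : ℕ) (hn : Fintype.card V = n)
    (hnopack : ¬ ∃ σ : Equiv.Perm V, ∀ x y : V, G2.Adj x y → ¬ G1.Adj (σ x) (σ y))
    (u v : V) (huv : G1.edgeSet ∩ G2.edgeSet = {s(u, v)})
    (Astar : Finset V)
    (hAstar : Astar = ((G1.neighborFinset u).biUnion fun x => G2.neighborFinset x)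
        \ (G2.neighborFinset u ∪ ((G2.neighborFinset u).biUnion fun x => G1.neighborFinset x))) :
    n ≤ (G2.neighborFinset u).card + Astar.card
      + ((G2.neighborFinset u).biUnion fun x => G1.neighborFinset x).card := by
  have hcommon {x y : V} (h1 : G1.Adj x y) (h2 : G2.Adj x y) : x = u ∨ y = u := by
    have : s(x, y) ∈ G1.edgeSet ∩ G2.edgeSet := ⟨h1, h2⟩
    rw [huv, Set.mem_singleton_iff, Sym2.eq_iff] at this
    tauto
  have hcover : ∀ w, w ∈ G2.neighborFinset u ∪ Astar
      ∪ (G2.neighborFinset u).biUnion fun x => G1.neighborFinset x := by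
    intro w
    by_contra hw
    simp only [hAstar, mem_union, mem_sdiff, mem_biUnion, mem_neighborFinset] at hw
    push Not at hw
    obtain ⟨⟨h2u, hA⟩, h21⟩ := hw
    have h12 (z : V) (h1 : G1.Adj u z) (h2 : G2.Adj z w) : False := by
      obtain h | ⟨a, ha2, ha1⟩ := hA ⟨z, h1, h2⟩
      exacts [h2u h, h21 a ha2 ha1]
    refine hnopack ⟨Equiv.swap u w, fun x y h2 h1 => ?_⟩
    obtain ⟨h1, hxu, hyu⟩ := adj_of_adj_swap h2u h21 h12 h2 h1
    exact (hcommon h1 h2).elim hxu hyu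
  calc n = #(univ : Finset V) := by rw [card_univ, hn]
    _ ≤ _ := card_le_card fun w _ => hcover w
    _ ≤ _ := card_union_le _ _
    _ ≤ _ := Nat.add_le_add_right (card_union_le _ _) _
end

section
/- Let G1 and G2 be simple graphs on the same finite vertex set of size n that do not pack, and suppose that the edge {u,v} is the unique edge belonging to both G1 and G2 (i.e., E(G1) ∩ E(G2) = {{u,v}}). Then n ≤ |N1*(u)| + |N2(u)| + |B(u)| + |N2(N1(u))|. -/
open SimpleGraph Finset

/-!
If `w` lies outside `N2(u) ∪ N1(N2(u)) ∪ N2(N1(u))` and every common edge of `G1` and `G2`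
contains `u`, then the transposition of `u` and `w` packs the two graphs: a red edge avoiding
`u` and `w` is fixed and is not blue, and a red edge at `u` or `w` is sent onto a blue edge only
if `w` is in one of the three excluded sets. Hence when the graphs do not pack these three sets
cover the vertex set, and splitting `N1(N2(u))` along `N1(u)` gives the four sets of the bound.
-/

namespace SimpleGraph

variable {V : Type*} (G1 G2 : SimpleGraph V)

theorem swap_packs [DecidableEq V] {u w : V}
    (hcommon : ∀ x y, G1.Adj x y → G2.Adj x y → x = u ∨ y = u)
    (hw2 : ¬ G2.Adj u w) (hw12 : ∀ x, G2.Adj u x → ¬ G1.Adj x w)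
    (hw21 : ∀ x, G1.Adj u x → ¬ G2.Adj x w) (x y : V) (h2 : G2.Adj x y) :
    ¬ G1.Adj (Equiv.swap u w x) (Equiv.swap u w y) := by
  grind [SimpleGraph.irrefl, SimpleGraph.adj_symm]

theorem adj_or_of_not_packs [DecidableEq V] {u : V}
    (hnopack : ¬ ∃ σ : Equiv.Perm V, ∀ x y : V, G2.Adj x y → ¬ G1.Adj (σ x) (σ y))
    (hcommon : ∀ x y, G1.Adj x y → G2.Adj x y → x = u ∨ y = u) (w : V) :
    G2.Adj u w ∨ (∃ x, G2.Adj u x ∧ G1.Adj x w) ∨ ∃ x, G1.Adj u x ∧ G2.Adj x w := by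
  by_contra! hw
  obtain ⟨hw2, hw12, hw21⟩ := hw
  exact hnopack ⟨Equiv.swap u w, swap_packs G1 G2 hcommon hw2 hw12 hw21⟩

theorem adj_eq_or_of_edgeSet_inter_eq {u v : V} (huv : G1.edgeSet ∩ G2.edgeSet = {s(u, v)})
    (x y : V) (h1 : G1.Adj x y) (h2 : G2.Adj x y) : x = u ∨ y = u := by
  have hxy : s(x, y) ∈ G1.edgeSet ∩ G2.edgeSet := ⟨h1, h2⟩
  rw [huv, Set.mem_singleton_iff, Sym2.eq_iff] at hxy
  tauto

end SimpleGraph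

theorem Finset.union_subset_split {α : Type*} [DecidableEq α] (A P Q R : Finset α) :
    P ∪ Q ∪ R ⊆ A ∩ (Q \ (P ∪ R)) ∪ P ∪ Q \ (A ∪ P ∪ R) ∪ R := by
  intro x
  simp only [mem_union, mem_inter, mem_sdiff]
  tauto

theorem stmt_11 {V : Type*} [Fintype V] [DecidableEq V]
    (G1 G2 : SimpleGraph V) [DecidableRel G1.Adj] [DecidableRel G2.Adj]
    (n : ℕ) (hn : Fintype.card V = n)
    (hnopack : ¬ ∃ σ : Equiv.Perm V, ∀ x y : V, G2.Adj x y → ¬ G1.Adj (σ x) (σ y))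
    (u v : V) (huv : G1.edgeSet ∩ G2.edgeSet = {s(u, v)})
    (N1star B : Finset V)
    (hN1star : N1star = G1.neighborFinset u
        ∩ (((G2.neighborFinset u).biUnion fun x => G1.neighborFinset x)
          \ (G2.neighborFinset u ∪ ((G1.neighborFinset u).biUnion fun x => G2.neighborFinset x))))
    (hB : B = ((G2.neighborFinset u).biUnion fun x => G1.neighborFinset x)
        \ (G1.neighborFinset u ∪ G2.neighborFinset u
          ∪ ((G1.neighborFinset u).biUnion fun x => G2.neighborFinset x))) :
    n ≤ N1star.card + (G2.neighborFinset u).card + B.card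
      + ((G1.neighborFinset u).biUnion fun x => G2.neighborFinset x).card := by
  subst hn hN1star hB
  have hcover := adj_or_of_not_packs G1 G2 hnopack (adj_eq_or_of_edgeSet_inter_eq G1 G2 huv)
  have huniv : (univ : Finset V) ⊆ G2.neighborFinset u
      ∪ ((G2.neighborFinset u).biUnion fun x => G1.neighborFinset x)
      ∪ ((G1.neighborFinset u).biUnion fun x => G2.neighborFinset x) := by
    intro w _
    simpa only [mem_union, mem_biUnion, mem_neighborFinset, or_assoc] using hcover w
  calc Fintype.card V = #(univ : Finset V) := card_univ.symm
    _ ≤ _ := card_le_card (huniv.trans (union_subset_split (G1.neighborFinset u) _ _ _))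
    _ ≤ _ := (card_union_le _ _).trans <| Nat.add_le_add_right
      ((card_union_le _ _).trans <| Nat.add_le_add_right (card_union_le _ _) _) _
end

section
/- Let G1 and G2 be simple graphs on the same finite vertex set of size n that do not pack, and suppose that the edge {u,v} is the unique edge belonging to both G1 and G2 (i.e., E(G1) ∩ E(G2) = {{u,v}}). Then n ≤ |A*(v)| + |A*(u)| + |(N2(u) ∪ N1(N2(u))) ∩ (N2(v) ∪ N1(N2(v)))|. -/
/-!
Write `B(w) := N2(w) ∪ N1(N2(w))`. Every vertex `z ∉ B(u)` lies in `A*(u)`: the transposition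
of `u` and `z` is not a packing, so it maps some red edge `xy` onto a blue edge. Were `xy` disjoint
from `{u, z}` it would be a common edge, hence contain `u`. A red edge `uy` would make `z` red- or
blue-adjacent to `N2(u)`, i.e. put `z` in `B(u)`; so the red edge is `zy` with `uy` blue, and
`z ∈ N2(N1(u))`. The same holds for `v`, so `A*(u)`, `A*(v)` and `B(u) ∩ B(v)` cover all vertices.
-/

open SimpleGraph Finset

namespace SimpleGraph

variable {V : Type*}

def Packs (G1 G2 : SimpleGraph V) : Prop :=
  ∃ σ : Equiv.Perm V, ∀ x y : V, G2.Adj x y → ¬ G1.Adj (σ x) (σ y)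

theorem exists_adj_perm_of_not_packs {G1 G2 : SimpleGraph V} (h : ¬ G1.Packs G2)
    (σ : Equiv.Perm V) : ∃ x y, G2.Adj x y ∧ G1.Adj (σ x) (σ y) := by
  simp only [Packs, not_exists, not_forall, not_not, exists_prop] at h
  exact h σ

theorem exists_adj_adj_of_not_packs {G1 G2 : SimpleGraph V} (hnp : ¬ G1.Packs G2) {u z : V}
    (hcommon : ∀ x y, G1.Adj x y → G2.Adj x y → x = u ∨ y = u)
    (huz : ¬ G2.Adj u z) (hNz : ∀ w, G2.Adj u w → ¬ G1.Adj w z) :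
    ∃ w, G1.Adj u w ∧ G2.Adj w z := by
  classical
  set σ := Equiv.swap u z
  have hσ : ∀ y, y ≠ u → y ≠ z → σ y = y := fun y => Equiv.swap_apply_of_ne_of_ne
  obtain ⟨x, y, hred, hblue, hx⟩ :
      ∃ x y, G2.Adj x y ∧ G1.Adj (σ x) (σ y) ∧ (x = u ∨ x = z) := by
    obtain ⟨x, y, hred, hblue⟩ := exists_adj_perm_of_not_packs hnp σ
    by_cases hx : x = u ∨ x = z
    · exact ⟨x, y, hred, hblue, hx⟩
    by_cases hy : y = u ∨ y = z
    · exact ⟨y, x, hred.symm, hblue.symm, hy⟩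
    push Not at hx hy
    rw [hσ x hx.1 hx.2, hσ y hy.1 hy.2] at hblue
    rcases hcommon x y hblue hred with h | h
    exacts [(hx.1 h).elim, (hy.1 h).elim]
  rcases hx with rfl | rfl
  · by_cases hyz : y = z
    · exact (huz (hyz ▸ hred)).elim
    rw [Equiv.swap_apply_left, hσ y hred.ne.symm hyz] at hblue
    exact (hNz y hred hblue.symm).elim
  · by_cases hyu : y = u
    · exact (huz (hyu ▸ hred.symm)).elim
    rw [Equiv.swap_apply_right, hσ y hyu hred.ne.symm] at hblue
    exact ⟨y, hblue, hred.symm⟩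

variable [Fintype V] [DecidableEq V] (G1 G2 : SimpleGraph V) [DecidableRel G1.Adj]
  [DecidableRel G2.Adj]

def redBlueNbhd (w : V) : Finset V :=
  G2.neighborFinset w ∪ (G2.neighborFinset w).biUnion fun x => G1.neighborFinset x

def aStar (w : V) : Finset V :=
  (G1.neighborFinset w).biUnion (fun x => G2.neighborFinset x) \ redBlueNbhd G1 G2 w

variable {G1 G2}

theorem mem_aStar_of_not_mem_redBlueNbhd (hnp : ¬ G1.Packs G2) {u z : V}
    (hcommon : ∀ x y, G1.Adj x y → G2.Adj x y → x = u ∨ y = u)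
    (hz : z ∉ redBlueNbhd G1 G2 u) : z ∈ aStar G1 G2 u := by
  refine mem_sdiff.2 ⟨?_, hz⟩
  simp only [redBlueNbhd, mem_union, mem_biUnion, mem_neighborFinset, not_or, not_exists,
    not_and] at hz
  obtain ⟨w, huw, hwz⟩ := exists_adj_adj_of_not_packs hnp hcommon hz.1 hz.2
  simp only [mem_biUnion, mem_neighborFinset]
  exact ⟨w, huw, hwz⟩

theorem card_le_aStar_add_aStar_add_inter (hnp : ¬ G1.Packs G2) {u v : V}
    (huv : G1.edgeSet ∩ G2.edgeSet = {s(u, v)}) :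
    Fintype.card V ≤ (aStar G1 G2 v).card + (aStar G1 G2 u).card
      + (redBlueNbhd G1 G2 u ∩ redBlueNbhd G1 G2 v).card := by
  have hcommon : ∀ x y, G1.Adj x y → G2.Adj x y → s(x, y) = s(u, v) := fun x y h1 h2 =>
    (Set.ext_iff.1 huv s(x, y)).1 ⟨h1, h2⟩
  have hcover : (univ : Finset V) ⊆
      aStar G1 G2 v ∪ aStar G1 G2 u ∪ (redBlueNbhd G1 G2 u ∩ redBlueNbhd G1 G2 v) := by
    intro z _
    by_cases hu : z ∈ redBlueNbhd G1 G2 u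
    · by_cases hv : z ∈ redBlueNbhd G1 G2 v
      · exact mem_union_right _ (mem_inter.2 ⟨hu, hv⟩)
      · refine mem_union_left _ (mem_union_left _ (mem_aStar_of_not_mem_redBlueNbhd hnp ?_ hv))
        intro x y h1 h2
        rcases Sym2.eq_iff.1 (hcommon x y h1 h2) with ⟨-, h⟩ | ⟨h, -⟩ <;> simp [h]
    · refine mem_union_left _ (mem_union_right _ (mem_aStar_of_not_mem_redBlueNbhd hnp ?_ hu))
      intro x y h1 h2
      rcases Sym2.eq_iff.1 (hcommon x y h1 h2) with ⟨h, -⟩ | ⟨-, h⟩ <;> simp [h]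
  calc Fintype.card V = (univ : Finset V).card := card_univ.symm
    _ ≤ _ := card_le_card hcover
    _ ≤ _ := card_union_le _ _
    _ ≤ _ := Nat.add_le_add_right (card_union_le _ _) _

end SimpleGraph

theorem stmt_12 {V : Type*} [Fintype V] [DecidableEq V]
    (G1 G2 : SimpleGraph V) [DecidableRel G1.Adj] [DecidableRel G2.Adj]
    (n : ℕ) (hn : Fintype.card V = n)
    (hnopack : ¬ ∃ σ : Equiv.Perm V, ∀ x y : V, G2.Adj x y → ¬ G1.Adj (σ x) (σ y))
    (u v : V) (huv : G1.edgeSet ∩ G2.edgeSet = {s(u, v)})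
    (Astaru Astarv : Finset V)
    (hAstaru : Astaru = ((G1.neighborFinset u).biUnion fun x => G2.neighborFinset x)
        \ (G2.neighborFinset u ∪ ((G2.neighborFinset u).biUnion fun x => G1.neighborFinset x)))
    (hAstarv : Astarv = ((G1.neighborFinset v).biUnion fun x => G2.neighborFinset x)
        \ (G2.neighborFinset v ∪ ((G2.neighborFinset v).biUnion fun x => G1.neighborFinset x))) :
    n ≤ Astarv.card + Astaru.card
      + ((G2.neighborFinset u ∪ ((G2.neighborFinset u).biUnion fun x => G1.neighborFinset x))
        ∩ (G2.neighborFinset v ∪ ((G2.neighborFinset v).biUnion fun x => G1.neighborFinset x))).card := by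
  subst hn hAstaru hAstarv
  exact card_le_aStar_add_aStar_add_inter hnopack huv
end

section
/- Let t ≥ 2 and Δ2 ≥ 1 be integers. Let G1 and G2 be simple graphs on the same finite vertex set of size n that do not pack, such that the edge {u,v} is the unique edge belonging to both G1 and G2 (i.e., E(G1) ∩ E(G2) = {{u,v}}), the maximum codegree of G1 satisfies Δ^∧(G1) < t, and Δ(G2) ≤ Δ2. Then for every b ∈ B(u), |N1(b) ∩ A*(u)| ≥ |A*(u)|/Δ2 − t·(Δ2+1). -/
open SimpleGraph Finset

/-!
Non-packability is used through two permutations that would otherwise pack `G1` and `G2`; both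
move `u`, so a red edge with both ends fixed is harmless, the only common edge `uv` containing `u`.
The transposition `(u y)` shows that every vertex lies in `N2(u) ∪ N1(N2(u)) ∪ N2(N1(u))`; the
3-cycle `u ↦ a ↦ b ↦ u` shows that every `a ∈ A*(u)` has a red neighbour among the blue
neighbours of `b ∈ B(u)`. Hence `|A*(u)| ≤ Δ2 |N1(b)|`. A blue neighbour of `b` outside `A*(u)`
is then some `w ∈ N2(u)` or a common blue neighbour of `b` and such a `w`, so by the codegree
bound there are at most `Δ2 t` of them, and `|A*(u)| ≤ Δ2 (|N1(b) ∩ A*(u)| + Δ2 t)`.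
-/

namespace GraphPacking

variable {V : Type*} {G1 G2 : SimpleGraph V}

def Packs (G1 G2 : SimpleGraph V) : Prop :=
  ∃ σ : Equiv.Perm V, ∀ x y : V, G2.Adj x y → ¬ G1.Adj (σ x) (σ y)

theorem packs_of_forall_mem (σ : Equiv.Perm V) (S : Set V) (hσ : ∀ x ∉ S, σ x = x)
    (hS : ∀ x z, G1.Adj x z → G2.Adj x z → x ∈ S ∨ z ∈ S)
    (h : ∀ x ∈ S, ∀ z, G2.Adj x z → ¬ G1.Adj (σ x) (σ z)) : Packs G1 G2 := by
  refine ⟨σ, fun x z hxz hσxz => ?_⟩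
  by_cases hx : x ∈ S
  · exact h x hx z hxz hσxz
  by_cases hz : z ∈ S
  · exact h z hz x hxz.symm hσxz.symm
  rw [hσ x hx, hσ z hz] at hσxz
  exact (hS x z hσxz hxz).elim hx hz

theorem mem_or_mem_of_adj_of_adj {u v x z : V} {S : Set V}
    (huv : G1.edgeSet ∩ G2.edgeSet = {s(u, v)}) (hu : u ∈ S) (h1 : G1.Adj x z)
    (h2 : G2.Adj x z) : x ∈ S ∨ z ∈ S := by
  have hxz : s(x, z) ∈ G1.edgeSet ∩ G2.edgeSet := ⟨h1, h2⟩
  rw [huv, Set.mem_singleton_iff, Sym2.eq_iff] at hxz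
  rcases hxz with ⟨rfl, -⟩ | ⟨-, rfl⟩
  exacts [.inl hu, .inr hu]

theorem adj_or_exists_adj_adj_of_not_packs [DecidableEq V] {u v : V} (hnp : ¬ Packs G1 G2)
    (huv : G1.edgeSet ∩ G2.edgeSet = {s(u, v)}) (y : V) :
    G2.Adj u y ∨ (∃ w, G2.Adj u w ∧ G1.Adj w y) ∨ (∃ x, G1.Adj u x ∧ G2.Adj x y) := by
  by_contra! h
  obtain ⟨huy, hN1N2, hN2N1⟩ := h
  refine hnp (packs_of_forall_mem (Equiv.swap u y) {u, y}
    (fun x hx => by simp_all [Equiv.swap_apply_of_ne_of_ne])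
    (fun _ _ => mem_or_mem_of_adj_of_adj huv (by simp)) ?_)
  rintro x (rfl | rfl) z hxz
  · have hzy : z ≠ y := by rintro rfl; exact huy hxz
    rw [Equiv.swap_apply_left, Equiv.swap_apply_of_ne_of_ne hxz.ne' hzy]
    exact fun h => hN1N2 z hxz h.symm
  · have hzu : z ≠ u := by rintro rfl; exact huy hxz.symm
    rw [Equiv.swap_apply_right, Equiv.swap_apply_of_ne_of_ne hzu hxz.ne']
    exact fun h => hN2N1 z h hxz.symm

section Neighbourhoods

variable [Fintype V] [DecidableEq V] [DecidableRel G1.Adj] [DecidableRel G2.Adj]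

def aStar (G1 G2 : SimpleGraph V) [DecidableRel G1.Adj] [DecidableRel G2.Adj] (u : V) :
    Finset V :=
  ((G1.neighborFinset u).biUnion fun x => G2.neighborFinset x)
    \ (G2.neighborFinset u ∪ ((G2.neighborFinset u).biUnion fun x => G1.neighborFinset x))

def bSet (G1 G2 : SimpleGraph V) [DecidableRel G1.Adj] [DecidableRel G2.Adj] (u : V) :
    Finset V :=
  ((G2.neighborFinset u).biUnion fun x => G1.neighborFinset x)
    \ (G1.neighborFinset u ∪ G2.neighborFinset u
      ∪ ((G1.neighborFinset u).biUnion fun x => G2.neighborFinset x))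

theorem mem_aStar {u a : V} :
    a ∈ aStar G1 G2 u ↔ (∃ x, G1.Adj u x ∧ G2.Adj x a) ∧ ¬ G2.Adj u a ∧
      ∀ w, G2.Adj u w → ¬ G1.Adj w a := by
  simp [aStar]

theorem mem_bSet {u b : V} :
    b ∈ bSet G1 G2 u ↔ (∃ w, G2.Adj u w ∧ G1.Adj w b) ∧ ¬ G1.Adj u b ∧ ¬ G2.Adj u b ∧
      ∀ x, G1.Adj u x → ¬ G2.Adj x b := by
  simp [bSet]

theorem exists_adj_of_mem_aStar_of_mem_bSet {u v a b : V} (hnp : ¬ Packs G1 G2)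
    (huv : G1.edgeSet ∩ G2.edgeSet = {s(u, v)}) (ha : a ∈ aStar G1 G2 u)
    (hb : b ∈ bSet G1 G2 u) : ∃ y, G2.Adj a y ∧ G1.Adj b y := by
  by_contra! hab
  obtain ⟨⟨x, hux, hxa⟩, hua, hN1N2a⟩ := mem_aStar.1 ha
  obtain ⟨-, hub1, hub2, hN2N1b⟩ := mem_bSet.1 hb
  obtain ⟨h1uv, h2uv⟩ : s(u, v) ∈ G1.edgeSet ∩ G2.edgeSet := huv ▸ rfl
  have hau : a ≠ u := by rintro rfl; exact hN1N2a v h2uv h1uv.symm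
  have hbu : b ≠ u := by rintro rfl; exact hN2N1b v h1uv h2uv.symm
  have hab' : a ≠ b := by rintro rfl; exact hN2N1b x hux hxa
  set σ : Equiv.Perm V := (Equiv.swap u a).trans (Equiv.swap u b)
  have hσu : σ u = a := by simp [σ, Equiv.swap_apply_of_ne_of_ne hau hab']
  have hσa : σ a = b := by simp [σ]
  have hσb : σ b = u := by simp [σ, Equiv.swap_apply_of_ne_of_ne hbu hab'.symm]
  have hσ : ∀ z, z ≠ u → z ≠ a → z ≠ b → σ z = z := fun z hzu hza hzb => by
    simp [σ, Equiv.swap_apply_of_ne_of_ne hzu hza, Equiv.swap_apply_of_ne_of_ne hzu hzb]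
  refine hnp (packs_of_forall_mem σ {u, a, b} (fun z hz => ?_)
    (fun _ _ => mem_or_mem_of_adj_of_adj huv (by simp)) ?_)
  · simp only [Set.mem_insert_iff, Set.mem_singleton_iff, not_or] at hz
    exact hσ z hz.1 hz.2.1 hz.2.2
  rintro x (rfl | rfl | rfl) z hxz
  · have hza : z ≠ a := by rintro rfl; exact hua hxz
    have hzb : z ≠ b := by rintro rfl; exact hub2 hxz
    rw [hσu, hσ z hxz.ne' hza hzb]
    exact fun h => hN1N2a z hxz h.symm
  · rw [hσa]
    rcases eq_or_ne z b with rfl | hzb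
    · rw [hσb]
      exact fun h => hub1 h.symm
    have hzu : z ≠ u := by rintro rfl; exact hua hxz.symm
    rw [hσ z hzu hxz.ne' hzb]
    exact hab z hxz
  · rw [hσb]
    rcases eq_or_ne z a with rfl | hza
    · rw [hσa]
      exact hub1
    have hzu : z ≠ u := by rintro rfl; exact hub2 hxz.symm
    rw [hσ z hzu hza hxz.ne']
    exact fun h => hN2N1b z h hxz.symm

theorem adj_or_exists_adj_adj_of_not_mem_aStar {u v y : V} (hnp : ¬ Packs G1 G2)
    (huv : G1.edgeSet ∩ G2.edgeSet = {s(u, v)}) (hy : y ∉ aStar G1 G2 u) :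
    G2.Adj u y ∨ ∃ w, G2.Adj u w ∧ G1.Adj w y := by
  rcases adj_or_exists_adj_adj_of_not_packs hnp huv y with h | h | ⟨x, hux, hxy⟩
  · exact .inl h
  · exact .inr h
  by_contra! h
  exact hy (mem_aStar.2 ⟨⟨x, hux, hxy⟩, h.1, h.2⟩)

theorem card_neighborFinset_sdiff_aStar_le {u v b : V} {t Δ : ℕ} (hnp : ¬ Packs G1 G2)
    (huv : G1.edgeSet ∩ G2.edgeSet = {s(u, v)})
    (hcodeg : ∀ x y : V, x ≠ y → #(G1.neighborFinset x ∩ G1.neighborFinset y) < t)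
    (hΔ : G2.maxDegree ≤ Δ) (hub : ¬ G2.Adj u b) :
    #(G1.neighborFinset b \ aStar G1 G2 u) ≤ Δ * t := by
  have hcover : G1.neighborFinset b \ aStar G1 G2 u ⊆
      (G2.neighborFinset u).biUnion fun w =>
        insert w (G1.neighborFinset b ∩ G1.neighborFinset w) := by
    intro y hy
    obtain ⟨hby, hy⟩ := mem_sdiff.1 hy
    simp only [mem_biUnion, mem_insert, mem_inter, mem_neighborFinset]
    rcases adj_or_exists_adj_adj_of_not_mem_aStar hnp huv hy with huy | ⟨w, huw, hwy⟩
    · exact ⟨y, huy, .inl rfl⟩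
    · exact ⟨w, huw, .inr ⟨(mem_neighborFinset _ _ _).1 hby, hwy⟩⟩
  calc #(G1.neighborFinset b \ aStar G1 G2 u)
      ≤ #(G2.neighborFinset u) * t := by
        refine (card_le_card hcover).trans (card_biUnion_le_card_mul _ _ _ fun w hw => ?_)
        have hbw : b ≠ w := by rintro rfl; exact hub ((mem_neighborFinset _ _ _).1 hw)
        exact (card_insert_le _ _).trans (hcodeg b w hbw)
    _ ≤ Δ * t := by
        rw [card_neighborFinset_eq_degree]
        exact Nat.mul_le_mul_right _ ((G2.degree_le_maxDegree u).trans hΔ)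

theorem card_aStar_le {u v b : V} {t Δ : ℕ} (hnp : ¬ Packs G1 G2)
    (huv : G1.edgeSet ∩ G2.edgeSet = {s(u, v)})
    (hcodeg : ∀ x y : V, x ≠ y → #(G1.neighborFinset x ∩ G1.neighborFinset y) < t)
    (hΔ : G2.maxDegree ≤ Δ) (hb : b ∈ bSet G1 G2 u) :
    #(aStar G1 G2 u) ≤ (#(G1.neighborFinset b ∩ aStar G1 G2 u) + Δ * t) * Δ := by
  have hcover : aStar G1 G2 u ⊆ (G1.neighborFinset b).biUnion fun y => G2.neighborFinset y := by
    intro a ha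
    obtain ⟨y, hay, hby⟩ := exists_adj_of_mem_aStar_of_mem_bSet hnp huv ha hb
    simpa using ⟨y, hby, hay.symm⟩
  calc #(aStar G1 G2 u) ≤ #(G1.neighborFinset b) * Δ :=
        (card_le_card hcover).trans <| card_biUnion_le_card_mul _ _ _ fun y _ => by
          rw [card_neighborFinset_eq_degree]
          exact (G2.degree_le_maxDegree y).trans hΔ
    _ = (#(G1.neighborFinset b ∩ aStar G1 G2 u) +
          #(G1.neighborFinset b \ aStar G1 G2 u)) * Δ := by
        rw [card_inter_add_card_sdiff]
    _ ≤ (#(G1.neighborFinset b ∩ aStar G1 G2 u) + Δ * t) * Δ := by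
        gcongr
        exact card_neighborFinset_sdiff_aStar_le hnp huv hcodeg hΔ (mem_bSet.1 hb).2.2.1

end Neighbourhoods

theorem div_sub_mul_add_one_le_of_le {a k t Δ : ℕ} (h : a ≤ (k + Δ * t) * Δ) :
    (a : ℝ) / Δ - t * (Δ + 1) ≤ k := by
  rcases Nat.eq_zero_or_pos Δ with rfl | hΔ
  · simp only [CharP.cast_eq_zero, div_zero, zero_add, mul_one]
    linarith [(t.cast_nonneg : (0 : ℝ) ≤ t), (k.cast_nonneg : (0 : ℝ) ≤ k)]
  have hΔ' : (0 : ℝ) < Δ := by exact_mod_cast hΔ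
  have ha : (a : ℝ) / Δ ≤ k + Δ * t := by
    rw [div_le_iff₀ hΔ']
    exact_mod_cast h
  linarith [(t.cast_nonneg : (0 : ℝ) ≤ t)]

end GraphPacking

theorem stmt_14_general {V : Type*} [Fintype V] [DecidableEq V]
    (G1 G2 : SimpleGraph V) [DecidableRel G1.Adj] [DecidableRel G2.Adj]
    (t Δ2 : ℕ)
    (hnopack : ¬ ∃ σ : Equiv.Perm V, ∀ x y : V, G2.Adj x y → ¬ G1.Adj (σ x) (σ y))
    (u v : V) (huv : G1.edgeSet ∩ G2.edgeSet = {s(u, v)})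
    (hcodeg : ∀ x y : V, x ≠ y →
      (G1.neighborFinset x ∩ G1.neighborFinset y).card < t)
    (hΔ2 : G2.maxDegree ≤ Δ2)
    (Astar B : Finset V)
    (hAstar : Astar = ((G1.neighborFinset u).biUnion fun x => G2.neighborFinset x)
        \ (G2.neighborFinset u ∪ ((G2.neighborFinset u).biUnion fun x => G1.neighborFinset x)))
    (hB : B = ((G2.neighborFinset u).biUnion fun x => G1.neighborFinset x)
        \ (G1.neighborFinset u ∪ G2.neighborFinset u
          ∪ ((G1.neighborFinset u).biUnion fun x => G2.neighborFinset x))) :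
    ∀ b ∈ B, ((G1.neighborFinset b ∩ Astar).card : ℝ)
      ≥ (Astar.card : ℝ) / (Δ2 : ℝ) - (t : ℝ) * ((Δ2 : ℝ) + 1) := by
  rintro b hb
  subst hAstar hB
  exact GraphPacking.div_sub_mul_add_one_le_of_le
    (GraphPacking.card_aStar_le hnopack huv hcodeg hΔ2 hb)

theorem stmt_14 {V : Type*} [Fintype V] [DecidableEq V]
    (G1 G2 : SimpleGraph V) [DecidableRel G1.Adj] [DecidableRel G2.Adj]
    (n t Δ2 : ℕ) (ht : 2 ≤ t) (hΔ2pos : 1 ≤ Δ2)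
    (hn : Fintype.card V = n)
    (hnopack : ¬ ∃ σ : Equiv.Perm V, ∀ x y : V, G2.Adj x y → ¬ G1.Adj (σ x) (σ y))
    (u v : V) (huv : G1.edgeSet ∩ G2.edgeSet = {s(u, v)})
    (hcodeg : ∀ x y : V, x ≠ y →
      (G1.neighborFinset x ∩ G1.neighborFinset y).card < t)
    (hΔ2 : G2.maxDegree ≤ Δ2)
    (Astar B : Finset V)
    (hAstar : Astar = ((G1.neighborFinset u).biUnion fun x => G2.neighborFinset x)
        \ (G2.neighborFinset u ∪ ((G2.neighborFinset u).biUnion fun x => G1.neighborFinset x)))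
    (hB : B = ((G2.neighborFinset u).biUnion fun x => G1.neighborFinset x)
        \ (G1.neighborFinset u ∪ G2.neighborFinset u
          ∪ ((G1.neighborFinset u).biUnion fun x => G2.neighborFinset x))) :
    ∀ b ∈ B, ((G1.neighborFinset b ∩ Astar).card : ℝ)
      ≥ (Astar.card : ℝ) / (Δ2 : ℝ) - (t : ℝ) * ((Δ2 : ℝ) + 1) :=
  stmt_14_general G1 G2 t Δ2 hnopack u v huv hcodeg hΔ2 Astar B hAstar hB
end

section
/- Let t ≥ 1, Δ1 ≥ 0 and Δ2 ≥ 0 be integers and let G1 and G2 be simple graphs on the same finite vertex set with Δ(G1) ≤ Δ1, Δ(G2) ≤ Δ2, and the maximum codegree of G1 satisfying Δ^∧(G1) < t. Then for any two vertices u and v, writing p = |N2(u) ∩ N2(v)|, one has |N1(N2(u)) ∩ N1(N2(v))| ≤ Δ1·p + (t−1)·(Δ2 − p)². -/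
/-! Split `N2(u)` into the common part `P = N2(u) ∩ N2(v)` and the private parts `A = N2(u) \ P`,
`B = N2(v) \ P`. A vertex adjacent in `G1` to both `N2(u)` and `N2(v)` is either a `G1`-neighbour
of some vertex of `P` (at most `Δ1·p` of those), or a common `G1`-neighbour of some pair
`(a, b) ∈ A × B`; such a pair consists of distinct vertices, so it has fewer than `t` common
neighbours, and there are at most `(Δ2 − p)²` pairs. -/

open SimpleGraph Finset

namespace Finset

variable {ι α : Type*} [DecidableEq ι] [DecidableEq α]

theorem biUnion_inter_biUnion_subset (s t : Finset ι) (f : ι → Finset α) :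
    s.biUnion f ∩ t.biUnion f ⊆
      (s ∩ t).biUnion f ∪ ((s \ t) ×ˢ (t \ s)).biUnion fun q => f q.1 ∩ f q.2 := by
  intro w hw
  obtain ⟨⟨x, hxs, hwx⟩, ⟨y, hyt, hwy⟩⟩ : (∃ x ∈ s, w ∈ f x) ∧ ∃ y ∈ t, w ∈ f y := by
    simpa only [mem_inter, mem_biUnion] using hw
  simp only [mem_union, mem_biUnion, mem_inter, mem_product, mem_sdiff]
  by_cases hxt : x ∈ t
  · exact .inl ⟨x, ⟨hxs, hxt⟩, hwx⟩
  by_cases hys : y ∈ s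
  · exact .inl ⟨y, ⟨hys, hyt⟩, hwy⟩
  · exact .inr ⟨(x, y), ⟨⟨hxs, hxt⟩, ⟨hyt, hys⟩⟩, hwx, hwy⟩

theorem card_biUnion_inter_biUnion_le (s t : Finset ι) (f : ι → Finset α) {d c : ℕ}
    (hd : ∀ x ∈ s ∩ t, #(f x) ≤ d) (hc : ∀ x ∈ s \ t, ∀ y ∈ t \ s, #(f x ∩ f y) ≤ c) :
    #(s.biUnion f ∩ t.biUnion f) ≤ #(s ∩ t) * d + #(s \ t) * #(t \ s) * c := by
  calc #(s.biUnion f ∩ t.biUnion f)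
      ≤ #((s ∩ t).biUnion f ∪ ((s \ t) ×ˢ (t \ s)).biUnion fun q => f q.1 ∩ f q.2) :=
        card_le_card (biUnion_inter_biUnion_subset s t f)
    _ ≤ #((s ∩ t).biUnion f) + #(((s \ t) ×ˢ (t \ s)).biUnion fun q => f q.1 ∩ f q.2) :=
        card_union_le _ _
    _ ≤ #(s ∩ t) * d + #((s \ t) ×ˢ (t \ s)) * c := by
        gcongr
        · exact card_biUnion_le_card_mul _ _ _ hd
        · refine card_biUnion_le_card_mul _ _ _ fun q hq => ?_
          rw [mem_product] at hq
          exact hc q.1 hq.1 q.2 hq.2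
    _ = #(s ∩ t) * d + #(s \ t) * #(t \ s) * c := by rw [card_product]

end Finset

namespace SimpleGraph

variable {V : Type*} [Fintype V]

theorem card_neighborFinset_le_of_maxDegree_le (G : SimpleGraph V) [DecidableRel G.Adj]
    {Δ : ℕ} (hΔ : G.maxDegree ≤ Δ) (x : V) : #(G.neighborFinset x) ≤ Δ := by
  rw [card_neighborFinset_eq_degree]
  exact (G.degree_le_maxDegree x).trans hΔ

variable [DecidableEq V]

theorem card_neighborFinset_sdiff_le (G : SimpleGraph V) [DecidableRel G.Adj]
    {Δ : ℕ} (hΔ : G.maxDegree ≤ Δ) (u v : V) :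
    #(G.neighborFinset u \ G.neighborFinset v) ≤
      Δ - #(G.neighborFinset u ∩ G.neighborFinset v) := by
  rw [card_sdiff, inter_comm]
  exact Nat.sub_le_sub_right (G.card_neighborFinset_le_of_maxDegree_le hΔ u) _

theorem card_biUnion_neighborFinset_inter_le (G₁ G₂ : SimpleGraph V)
    [DecidableRel G₁.Adj] [DecidableRel G₂.Adj] {Δ₁ Δ₂ c : ℕ}
    (hΔ₁ : G₁.maxDegree ≤ Δ₁) (hΔ₂ : G₂.maxDegree ≤ Δ₂)
    (hcodeg : ∀ x y, x ≠ y → #(G₁.neighborFinset x ∩ G₁.neighborFinset y) ≤ c) (u v : V) :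
    #((G₂.neighborFinset u).biUnion (fun x => G₁.neighborFinset x) ∩
        (G₂.neighborFinset v).biUnion fun x => G₁.neighborFinset x) ≤
      #(G₂.neighborFinset u ∩ G₂.neighborFinset v) * Δ₁ +
        (Δ₂ - #(G₂.neighborFinset u ∩ G₂.neighborFinset v)) ^ 2 * c := by
  refine (card_biUnion_inter_biUnion_le _ _ _
    (fun x _ => G₁.card_neighborFinset_le_of_maxDegree_le hΔ₁ x)
    (fun x hx y hy => hcodeg x y
      (ne_of_mem_of_not_mem (mem_sdiff.mp hy).1 (mem_sdiff.mp hx).2).symm)).trans ?_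
  have hu := G₂.card_neighborFinset_sdiff_le hΔ₂ u v
  have hv := G₂.card_neighborFinset_sdiff_le hΔ₂ v u
  rw [inter_comm] at hv
  rw [sq]
  gcongr

end SimpleGraph

theorem stmt_15 {V : Type*} [Fintype V] [DecidableEq V]
    (G1 G2 : SimpleGraph V) [DecidableRel G1.Adj] [DecidableRel G2.Adj]
    (t Δ1 Δ2 : ℕ) (ht : 1 ≤ t)
    (hΔ1 : G1.maxDegree ≤ Δ1) (hΔ2 : G2.maxDegree ≤ Δ2)
    (hcodeg : ∀ x y : V, x ≠ y →
      (G1.neighborFinset x ∩ G1.neighborFinset y).card < t)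
    (u v : V) (p : ℕ) (hp : p = (G2.neighborFinset u ∩ G2.neighborFinset v).card) :
    (((((G2.neighborFinset u).biUnion fun x => G1.neighborFinset x)
      ∩ ((G2.neighborFinset v).biUnion fun x => G1.neighborFinset x)).card : ℝ))
      ≤ (Δ1 : ℝ) * (p : ℝ) + ((t : ℝ) - 1) * ((Δ2 : ℝ) - (p : ℝ)) ^ 2 := by
  have hbound := card_biUnion_neighborFinset_inter_le G1 G2 hΔ1 hΔ2
    (fun x y hxy => Nat.le_sub_one_of_lt (hcodeg x y hxy)) u v
  rw [← hp] at hbound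
  have hpΔ2 : p ≤ Δ2 := hp ▸ (card_le_card inter_subset_left).trans
    (G2.card_neighborFinset_le_of_maxDegree_le hΔ2 u)
  calc _ ≤ ((p * Δ1 + (Δ2 - p) ^ 2 * (t - 1) : ℕ) : ℝ) := by exact_mod_cast hbound
    _ = _ := by push_cast [Nat.cast_sub hpΔ2, Nat.cast_sub ht]; ring
end

section
/- Let Δ2 ≥ 0 be an integer and 0 < ε < 1/2 a real number, and let G2 be a simple graph on a finite vertex set with Δ(G2) ≤ Δ2 such that |N2(x) ∩ N2(y)| ≥ (1−ε)·Δ2 for every edge xy of G2. Let u be a vertex and let S be a set of vertices disjoint from N2(u) ∪ {u} such that every a ∈ S has a neighbour in N2(u) (in G2). Then |S| ≤ ε·|N2(u)| / (1−2ε). -/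
/-!
Double count the edges between `S` and `N₂(u)`. If `a ∈ S` is adjacent to `x ∈ N₂(u)`, then most of
the `≥ (1 - ε)Δ₂` common neighbours of `a` and `x` lie in `N₂(u)`, since `x` has at most `εΔ₂`
neighbours outside `N₂(u)`; so `a` has `≥ (1 - 2ε)Δ₂` neighbours in `N₂(u)`. Conversely each
`y ∈ N₂(u)` has `≥ (1 - ε)Δ₂` neighbours inside `N₂(u)`, hence at most `εΔ₂` in `S`.
-/

open SimpleGraph Finset

namespace SimpleGraph

variable {V : Type*} [Fintype V] [DecidableEq V] (G : SimpleGraph V) [DecidableRel G.Adj]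

lemma filter_adj_eq_inter_neighborFinset (s : Finset V) (v : V) :
    {y ∈ s | G.Adj v y} = s ∩ G.neighborFinset v := by
  ext; simp

lemma card_filter_adj_add_card_filter_adj_le_degree {s t : Finset V} (hst : Disjoint s t)
    (v : V) : #{y ∈ s | G.Adj v y} + #{y ∈ t | G.Adj v y} ≤ G.degree v := by
  rw [← card_union_of_disjoint (disjoint_filter_filter hst), ← filter_union,
    ← card_neighborFinset_eq_degree]
  exact card_le_card fun y hy => (G.mem_neighborFinset v y).2 (mem_filter.1 hy).2

lemma card_neighborFinset_inter_add_card_filter_adj_le (a x : V) (t : Finset V) :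
    #(G.neighborFinset a ∩ G.neighborFinset x) + #{y ∈ t | G.Adj x y} ≤
      #{y ∈ t | G.Adj a y} + G.degree x := by
  have hcover : G.neighborFinset a ∩ G.neighborFinset x ⊆
      {y ∈ t | G.Adj a y} ∪ (G.neighborFinset x \ t) := by
    intro y; simp only [mem_inter, mem_union, mem_filter, mem_sdiff, mem_neighborFinset]; tauto
  have hsplit : #(G.neighborFinset x \ t) + #{y ∈ t | G.Adj x y} = G.degree x := by
    rw [filter_adj_eq_inter_neighborFinset, inter_comm, card_sdiff_add_card_inter,
      card_neighborFinset_eq_degree]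
  have := (card_le_card hcover).trans (card_union_le _ _)
  omega

section Codegree

variable {G} {Δ : ℕ} {ε : ℝ}

lemma codegree_ge_of_adj
    (hcodeg : ∀ x y, G.Adj x y → (#(G.neighborFinset x ∩ G.neighborFinset y) : ℝ) ≥ (1 - ε) * Δ)
    {x u : V} (hxu : G.Adj x u) :
    (1 - ε) * Δ ≤ #{y ∈ G.neighborFinset u | G.Adj x y} := by
  rw [filter_adj_eq_inter_neighborFinset, inter_comm]
  exact hcodeg x u hxu

lemma mul_le_card_filter_adj_of_adj_of_adj (hΔ : G.maxDegree ≤ Δ)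
    (hcodeg : ∀ x y, G.Adj x y → (#(G.neighborFinset x ∩ G.neighborFinset y) : ℝ) ≥ (1 - ε) * Δ)
    {a x u : V} (hax : G.Adj a x) (hxu : G.Adj x u) :
    (1 - 2 * ε) * Δ ≤ #{y ∈ G.neighborFinset u | G.Adj a y} := by
  have hcount : (#(G.neighborFinset a ∩ G.neighborFinset x) : ℝ) +
      #{y ∈ G.neighborFinset u | G.Adj x y} ≤
        #{y ∈ G.neighborFinset u | G.Adj a y} + G.degree x := by
    exact_mod_cast G.card_neighborFinset_inter_add_card_filter_adj_le a x _
  have hdeg : (G.degree x : ℝ) ≤ Δ := by exact_mod_cast (G.degree_le_maxDegree x).trans hΔ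
  linarith [hcodeg a x hax, codegree_ge_of_adj hcodeg hxu]

lemma card_filter_adj_le_mul_of_adj (hΔ : G.maxDegree ≤ Δ)
    (hcodeg : ∀ x y, G.Adj x y → (#(G.neighborFinset x ∩ G.neighborFinset y) : ℝ) ≥ (1 - ε) * Δ)
    {S : Finset V} {y u : V}
    (hS : Disjoint S (G.neighborFinset u)) (hyu : G.Adj y u) :
    #{a ∈ S | G.Adj a y} ≤ ε * Δ := by
  have hcount : (#{a ∈ S | G.Adj y a} : ℝ) + #{a ∈ G.neighborFinset u | G.Adj y a} ≤
      G.degree y := by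
    exact_mod_cast G.card_filter_adj_add_card_filter_adj_le_degree hS y
  have hdeg : (G.degree y : ℝ) ≤ Δ := by exact_mod_cast (G.degree_le_maxDegree y).trans hΔ
  simp_rw [G.adj_comm _ y]
  linarith [codegree_ge_of_adj hcodeg hyu]

end Codegree

end SimpleGraph

theorem stmt_17 {V : Type*} [Fintype V] [DecidableEq V]
    (G2 : SimpleGraph V) [DecidableRel G2.Adj]
    (Δ2 : ℕ) (ε : ℝ) (hε0 : 0 < ε) (hε1 : ε < 1 / 2)
    (hΔ2 : G2.maxDegree ≤ Δ2)
    (hcodeg : ∀ x y : V, G2.Adj x y →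
      ((G2.neighborFinset x ∩ G2.neighborFinset y).card : ℝ) ≥ (1 - ε) * (Δ2 : ℝ))
    (u : V) (S : Finset V)
    (hdisj : Disjoint S (insert u (G2.neighborFinset u)))
    (hnbr : ∀ a ∈ S, ∃ x ∈ G2.neighborFinset u, G2.Adj a x) :
    (S.card : ℝ) ≤ ε * ((G2.neighborFinset u).card : ℝ) / (1 - 2 * ε) := by
  obtain rfl | ⟨a, ha⟩ := S.eq_empty_or_nonempty
  · simp only [card_empty, Nat.cast_zero]
    have : 0 < 1 - 2 * ε := by linarith
    positivity
  have hΔpos : (0 : ℝ) < Δ2 := by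
    obtain ⟨x, -, hax⟩ := hnbr a ha
    exact_mod_cast ((G2.degree_pos_iff_exists_adj a).2 ⟨x, hax⟩).trans_le
      ((G2.degree_le_maxDegree a).trans hΔ2)
  have hdouble := card_nsmul_le_card_nsmul G2.Adj (t := G2.neighborFinset u)
    (fun a ha => by
      obtain ⟨x, hx, hax⟩ := hnbr a ha
      exact mul_le_card_filter_adj_of_adj_of_adj hΔ2 hcodeg hax
        ((G2.mem_neighborFinset u x).1 hx).symm)
    (fun y hy => card_filter_adj_le_mul_of_adj hΔ2 hcodeg
      (hdisj.mono_right (subset_insert _ _)) ((G2.mem_neighborFinset u y).1 hy).symm)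
  rw [nsmul_eq_mul, nsmul_eq_mul] at hdouble
  rw [le_div_iff₀ (by linarith)]
  nlinarith
end

section
/- Let t ≥ 2 and Δ2 ≥ 0 be integers and 0 < ε < 1/2 a real number. Let G1 and G2 be simple graphs on the same finite vertex set of size n that do not pack, such that the edge {u,v} is the unique edge belonging to both G1 and G2 (i.e., E(G1) ∩ E(G2) = {{u,v}}), the maximum codegree of G1 satisfies Δ^∧(G1) < t, Δ(G2) ≤ Δ2, and |N2(x) ∩ N2(y)| ≥ (1−ε)·Δ2 for every edge xy of G2. If |A*(u)| ≥ 1 + Δ2 + ε·Δ2/(1−2ε), then |B(u)| ≤ (t−1)·Δ2². -/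
/-!
Call `a ∈ A*(u)` bad if `N₂(a)` meets `N₂(u)`. A bad `a` has at least `(1 - 2ε)Δ₂` neighbours in
`N₂(u)`, while each `c ∈ N₂(u)` has at most `εΔ₂` neighbours outside `N₂(u)`; double counting
gives fewer than `|A*(u)|` bad vertices, so some `a ∈ A*(u)` has `N₂(a) ∩ N₂(u) = ∅`.
Non-packing forces every `w ∈ B(u)` to have a `G₁`-neighbour in `N₂(a)` (otherwise the 3-cycle
`u ↦ a ↦ w ↦ u` packs), and `w` has one in `N₂(u)` by definition. Hence `B(u)` is covered by the
sets `N₁(z) ∩ N₁(x)` with `z ∈ N₂(a)`, `x ∈ N₂(u)`, `z ≠ x`, each of size at most `t - 1`.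
-/

open SimpleGraph Finset

namespace SimpleGraph

variable {V : Type*} [Fintype V] [DecidableEq V] (G : SimpleGraph V) [DecidableRel G.Adj]
  {Δ : ℕ} {δ : ℝ}

theorem two_mul_sub_le_card_inter_neighborFinset (hdeg : ∀ x, G.degree x ≤ Δ)
    (hcodeg : ∀ x y, G.Adj x y → δ ≤ #(G.neighborFinset x ∩ G.neighborFinset y))
    {a z u : V} (haz : G.Adj a z) (hzu : G.Adj z u) :
    2 * δ - Δ ≤ #(G.neighborFinset a ∩ G.neighborFinset u) := by
  set P := G.neighborFinset a ∩ G.neighborFinset z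
  set Q := G.neighborFinset z ∩ G.neighborFinset u
  have hunion : #(P ∪ Q) ≤ Δ :=
    (card_le_card (union_subset inter_subset_right inter_subset_left)).trans (hdeg z)
  have hinter : #(P ∩ Q) ≤ #(G.neighborFinset a ∩ G.neighborFinset u) :=
    card_le_card fun c hc => by simp_all [P, Q]
  have hPQ : (#P + #Q : ℝ) ≤ #(G.neighborFinset a ∩ G.neighborFinset u) + Δ := by
    exact_mod_cast (card_inter_add_card_union P Q).symm.le.trans (add_le_add hinter hunion)
  linarith [hcodeg a z haz, hcodeg z u hzu]

theorem card_neighborFinset_sdiff_le_s18 (hdeg : ∀ x, G.degree x ≤ Δ)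
    (hcodeg : ∀ x y, G.Adj x y → δ ≤ #(G.neighborFinset x ∩ G.neighborFinset y))
    {c u : V} (hcu : G.Adj c u) :
    #(G.neighborFinset c \ G.neighborFinset u) ≤ Δ - δ := by
  have h : (#(G.neighborFinset c \ G.neighborFinset u) : ℝ) +
      #(G.neighborFinset c ∩ G.neighborFinset u) ≤ Δ := by
    exact_mod_cast (card_sdiff_add_card_inter _ _).trans_le (hdeg c)
  linarith [hcodeg c u hcu]

theorem card_mul_le_of_forall_mem_not_adj (hdeg : ∀ x, G.degree x ≤ Δ)
    (hcodeg : ∀ x y, G.Adj x y → δ ≤ #(G.neighborFinset x ∩ G.neighborFinset y))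
    (hδ : δ ≤ Δ) {u : V} {S : Finset V}
    (hS : ∀ a ∈ S, ¬ G.Adj u a ∧ (G.neighborFinset a ∩ G.neighborFinset u).Nonempty) :
    #S * (2 * δ - Δ) ≤ Δ * (Δ - δ) := by
  have hdc := card_nsmul_le_card_nsmul (s := S) (t := G.neighborFinset u) G.Adj
    (m := 2 * δ - Δ) (n := Δ - δ) (fun a ha => ?_) (fun c hc => ?_)
  · rw [nsmul_eq_mul, nsmul_eq_mul] at hdc
    refine hdc.trans (mul_le_mul_of_nonneg_right ?_ (by linarith))
    exact_mod_cast G.card_neighborFinset_eq_degree u ▸ hdeg u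
  · obtain ⟨z, hz⟩ := (hS a ha).2
    simp only [mem_inter, mem_neighborFinset] at hz
    have habove : (G.neighborFinset u).bipartiteAbove G.Adj a =
        G.neighborFinset a ∩ G.neighborFinset u := by
      ext; simp [bipartiteAbove, and_comm]
    rw [habove]
    exact G.two_mul_sub_le_card_inter_neighborFinset hdeg hcodeg hz.1 hz.2.symm
  · refine le_trans ?_ <|
      G.card_neighborFinset_sdiff_le_s18 hdeg hcodeg ((G.mem_neighborFinset u c).mp hc).symm
    exact_mod_cast card_le_card fun a ha => by
      simp only [bipartiteBelow, mem_filter] at ha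
      simpa [ha.2.symm] using (hS a ha.1).1

theorem exists_mem_disjoint_neighborFinset {ε : ℝ} (hε0 : 0 < ε) (hε1 : ε < 1 / 2)
    (hdeg : ∀ x, G.degree x ≤ Δ) (hΔ : 0 < Δ)
    (hcodeg : ∀ x y, G.Adj x y → (1 - ε) * Δ ≤ #(G.neighborFinset x ∩ G.neighborFinset y))
    {u : V} {A : Finset V} (hA : ∀ a ∈ A, ¬ G.Adj u a) (hcard : ε * Δ / (1 - 2 * ε) < #A) :
    ∃ a ∈ A, Disjoint (G.neighborFinset a) (G.neighborFinset u) := by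
  set Bad := A.filter fun a => (G.neighborFinset a ∩ G.neighborFinset u).Nonempty
  have hΔ' : (0 : ℝ) < Δ := Nat.cast_pos.mpr hΔ
  have hBad := G.card_mul_le_of_forall_mem_not_adj hdeg hcodeg (by nlinarith) (u := u)
    (S := Bad) fun a ha => ⟨hA a (mem_filter.mp ha).1, (mem_filter.mp ha).2⟩
  have hBad_le : (#Bad : ℝ) ≤ ε * Δ / (1 - 2 * ε) := by
    rw [le_div_iff₀ (by linarith)]
    nlinarith
  obtain ⟨a, haA, haBad⟩ :=
    exists_mem_notMem_of_card_lt_card (s := Bad) (by exact_mod_cast hBad_le.trans_lt hcard)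
  refine ⟨a, haA, ?_⟩
  rw [disjoint_iff_inter_eq_empty, ← not_nonempty_iff_eq_empty]
  simpa [Bad, haA] using haBad

theorem card_le_mul_mul_of_forall_exists_adj {k : ℕ}
    (hcodeg : ∀ x y, x ≠ y → #(G.neighborFinset x ∩ G.neighborFinset y) ≤ k)
    {B P Q : Finset V} (hPQ : Disjoint P Q)
    (hB : ∀ w ∈ B, (∃ z ∈ P, G.Adj w z) ∧ ∃ x ∈ Q, G.Adj w x) :
    #B ≤ #P * #Q * k := by
  have hcover :
      B ⊆ P.biUnion fun z => Q.biUnion fun x => G.neighborFinset z ∩ G.neighborFinset x := by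
    intro w hw
    obtain ⟨⟨z, hz, hwz⟩, x, hx, hwx⟩ := hB w hw
    simp only [mem_biUnion, mem_inter, mem_neighborFinset]
    exact ⟨z, hz, x, hx, hwz.symm, hwx.symm⟩
  rw [mul_assoc]
  refine (card_le_card hcover).trans (card_biUnion_le_card_mul _ _ _ fun z hz => ?_)
  exact card_biUnion_le_card_mul _ _ _ fun x hx =>
    hcodeg z x fun h => Finset.disjoint_left.mp hPQ hz (h ▸ hx)

end SimpleGraph

/-- Under the 3-cycle `u ↦ a ↦ w ↦ u`, the hypotheses rule out every conflict except an edge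
`a z` of `G2` sent onto an edge `w z` of `G1`. -/
theorem exists_adj_of_not_packs {V : Type*} [DecidableEq V] (G1 G2 : SimpleGraph V)
    (hnopack : ¬ ∃ σ : Equiv.Perm V, ∀ x y : V, G2.Adj x y → ¬ G1.Adj (σ x) (σ y))
    {u a w : V} (hcommon : ∀ x y, G1.Adj x y → G2.Adj x y → x = u ∨ y = u)
    (hau : a ≠ u) (hwu : w ≠ u) (hwa : w ≠ a)
    (hua : ¬ G2.Adj u a) (ha : ∀ x, G2.Adj u x → ¬ G1.Adj x a)
    (huw1 : ¬ G1.Adj u w) (huw2 : ¬ G2.Adj u w) (hw : ∀ y, G1.Adj u y → ¬ G2.Adj y w) :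
    ∃ z, G2.Adj a z ∧ G1.Adj w z := by
  by_contra! hne
  refine hnopack ⟨(Equiv.swap u a).trans (Equiv.swap u w), fun x y hxy h1 => ?_⟩
  have h1' := h1.symm
  have hxy' := hxy.symm
  simp only [Equiv.trans_apply, Equiv.swap_apply_def] at h1 h1'
  split_ifs at h1 h1' <;> subst_vars <;> grind [G2.irrefl]

theorem stmt_18_general {V : Type*} [Fintype V] [DecidableEq V]
    (G1 G2 : SimpleGraph V) [DecidableRel G1.Adj] [DecidableRel G2.Adj]
    (t Δ2 : ℕ) (ε : ℝ) (hε0 : 0 < ε) (hε1 : ε < 1 / 2)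
    (hnopack : ¬ ∃ σ : Equiv.Perm V, ∀ x y : V, G2.Adj x y → ¬ G1.Adj (σ x) (σ y))
    (u v : V) (huv : G1.edgeSet ∩ G2.edgeSet = {s(u, v)})
    (hcodeg : ∀ x y : V, x ≠ y →
      (G1.neighborFinset x ∩ G1.neighborFinset y).card < t)
    (hΔ2 : G2.maxDegree ≤ Δ2)
    (hadjcodeg : ∀ x y : V, G2.Adj x y →
      ((G2.neighborFinset x ∩ G2.neighborFinset y).card : ℝ) ≥ (1 - ε) * (Δ2 : ℝ))
    (Astar B : Finset V)
    (hAstar : Astar = ((G1.neighborFinset u).biUnion fun x => G2.neighborFinset x)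
        \ (G2.neighborFinset u ∪ ((G2.neighborFinset u).biUnion fun x => G1.neighborFinset x)))
    (hB : B = ((G2.neighborFinset u).biUnion fun x => G1.neighborFinset x)
        \ (G1.neighborFinset u ∪ G2.neighborFinset u
          ∪ ((G1.neighborFinset u).biUnion fun x => G2.neighborFinset x)))
    (hAbig : (Astar.card : ℝ) ≥ 1 + (Δ2 : ℝ) + ε * (Δ2 : ℝ) / (1 - 2 * ε)) :
    (B.card : ℝ) ≤ ((t : ℝ) - 1) * (Δ2 : ℝ) ^ 2 := by
  have hcommon : ∀ x y, G1.Adj x y → G2.Adj x y → x = u ∨ y = u := fun x y h1 h2 => by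
    have h : s(x, y) ∈ G1.edgeSet ∩ G2.edgeSet := ⟨h1, h2⟩
    rw [huv, Set.mem_singleton_iff, Sym2.eq_iff] at h
    tauto
  obtain ⟨huv1, huv2⟩ : G1.Adj u v ∧ G2.Adj u v := huv.symm.subset rfl
  have hdeg : ∀ x, G2.degree x ≤ Δ2 := fun x => (G2.degree_le_maxDegree x).trans hΔ2
  have hAstar_mem : ∀ a ∈ Astar, (∃ y, G1.Adj u y ∧ G2.Adj y a) ∧ ¬ G2.Adj u a ∧
      ∀ x, G2.Adj u x → ¬ G1.Adj x a := fun a ha => by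
    simpa [hAstar] using ha
  obtain ⟨a, haA, hdisj⟩ := G2.exists_mem_disjoint_neighborFinset hε0 hε1 hdeg
    ((G2.degree_pos_iff_exists_adj u).mpr ⟨v, huv2⟩ |>.trans_le (hdeg u)) hadjcodeg (u := u)
    (fun a ha => (hAstar_mem a ha).2.1) (by linarith [(Δ2.cast_nonneg : (0 : ℝ) ≤ Δ2)])
  obtain ⟨⟨y, huy, hya⟩, hua, ha⟩ := hAstar_mem a haA
  have hB_adj : ∀ w ∈ B, (∃ z ∈ G2.neighborFinset a, G1.Adj w z) ∧
      ∃ x ∈ G2.neighborFinset u, G1.Adj w x := by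
    intro w hw
    obtain ⟨⟨x, hux, hxw⟩, huw1, huw2, hw⟩ : (∃ x, G2.Adj u x ∧ G1.Adj x w) ∧ ¬ G1.Adj u w ∧
        ¬ G2.Adj u w ∧ ∀ y, G1.Adj u y → ¬ G2.Adj y w := by
      simpa [hB] using hw
    obtain ⟨z, haz, hwz⟩ := exists_adj_of_not_packs G1 G2 hnopack hcommon
      (by rintro rfl; exact ha v huv2 huv1.symm) (by rintro rfl; exact hw v huv1 huv2.symm)
      (by rintro rfl; exact hw y huy hya) hua ha huw1 huw2 hw
    exact ⟨⟨z, by simpa using haz, hwz⟩, x, by simpa using hux, hxw.symm⟩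
  have hcount : #B ≤ Δ2 * Δ2 * (t - 1) :=
    (G1.card_le_mul_mul_of_forall_exists_adj (k := t - 1)
      (fun x y hxy => Nat.le_sub_one_of_lt (hcodeg x y hxy)) hdisj hB_adj).trans
      (by gcongr <;> simpa using hdeg _)
  have ht : 1 ≤ t := Nat.one_le_of_lt (hcodeg u v huv1.ne)
  calc (#B : ℝ) ≤ ((Δ2 * Δ2 * (t - 1) : ℕ) : ℝ) := by exact_mod_cast hcount
    _ = ((t : ℝ) - 1) * Δ2 ^ 2 := by push_cast [Nat.cast_sub ht]; ring

theorem stmt_18 {V : Type*} [Fintype V] [DecidableEq V]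
    (G1 G2 : SimpleGraph V) [DecidableRel G1.Adj] [DecidableRel G2.Adj]
    (n t Δ2 : ℕ) (ε : ℝ) (ht : 2 ≤ t) (hε0 : 0 < ε) (hε1 : ε < 1 / 2)
    (hn : Fintype.card V = n)
    (hnopack : ¬ ∃ σ : Equiv.Perm V, ∀ x y : V, G2.Adj x y → ¬ G1.Adj (σ x) (σ y))
    (u v : V) (huv : G1.edgeSet ∩ G2.edgeSet = {s(u, v)})
    (hcodeg : ∀ x y : V, x ≠ y →
      (G1.neighborFinset x ∩ G1.neighborFinset y).card < t)
    (hΔ2 : G2.maxDegree ≤ Δ2)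
    (hadjcodeg : ∀ x y : V, G2.Adj x y →
      ((G2.neighborFinset x ∩ G2.neighborFinset y).card : ℝ) ≥ (1 - ε) * (Δ2 : ℝ))
    (Astar B : Finset V)
    (hAstar : Astar = ((G1.neighborFinset u).biUnion fun x => G2.neighborFinset x)
        \ (G2.neighborFinset u ∪ ((G2.neighborFinset u).biUnion fun x => G1.neighborFinset x)))
    (hB : B = ((G2.neighborFinset u).biUnion fun x => G1.neighborFinset x)
        \ (G1.neighborFinset u ∪ G2.neighborFinset u
          ∪ ((G1.neighborFinset u).biUnion fun x => G2.neighborFinset x)))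
    (hAbig : (Astar.card : ℝ) ≥ 1 + (Δ2 : ℝ) + ε * (Δ2 : ℝ) / (1 - 2 * ε)) :
    (B.card : ℝ) ≤ ((t : ℝ) - 1) * (Δ2 : ℝ) ^ 2 :=
  stmt_18_general G1 G2 t Δ2 ε hε0 hε1 hnopack u v huv hcodeg hΔ2 hadjcodeg Astar B hAstar hB hAbig
end
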